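/- Let (C,⊗,I) be a small symmetric monoidal category. Define the functor iSeq : NC^op × NC → Set by iSeq(X,Y) = Σ_{M : ℕ → ob C} Π_{n∈ℕ} Hom_C(M_{n−1} ⊗ X_n, M_n ⊗ Y_n), with the convention M_{−1} = I, and with functorial action by pre- and post-composition with the components of morphisms of NC. Then iSeq is a fixpoint of the endofunctor (hom ⊡ −) of the functor category [NC^op × NC, Set], i.e., there is a natural isomorphism iSeq(X,Y) ≅ Σ_{M∈ob C} Hom_C(X₀, M ⊗ Y₀) × iSeq(M·tail X, tail Y) given by splitting off the first morphism, and iSeq is the terminal such fixpoint: equivalently, iSeq with this structure is a terminal coalgebra for (hom ⊡ −). -/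

import Mathlib

/-!
STATEMENT 2: Intensional sequences are the terminal coalgebra (and terminal fixpoint)
of the endofunctor `(hom ⊡ −)` of `[NCᵒᵖ × NC, Set]`.

Set-valued bifunctors on the product category `NC = Π_{n∈ℕ} C` are given elementwise
(`SetBifunctor`).  The endofunctor `(hom ⊡ −)` sends `Q` to
`(X,Y) ↦ Σ_{M ∈ C} Hom(X₀, M ⊗ Y₀) × Q(M·tail X, tail Y)`; its coalgebras and their
morphisms are spelled out elementwise.  The functor `iSeq` of intensional sequences,
with its structure map splitting off the first morphism, is a coalgebra whose structure
map is a bijection at every pair of sequences (a fixpoint), and it is terminal among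
all coalgebras (hence the terminal fixpoint).
-/

open CategoryTheory MonoidalCategory

namespace Stmt2

universe v u

variable (C : Type u) [Category.{v} C] [MonoidalCategory C] [SymmetricCategory C]

/-- Sequences of objects: the objects of `NC`. -/
abbrev Seq := ℕ → C

variable {C}

/-- `tail X = (X₁, X₂, …)`. -/
def tailSeq (X : Seq C) : Seq C := fun n => X (n + 1)

/-- `M·X = (M ⊗ X₀, X₁, X₂, …)`. -/
def consSeq (M : C) (X : Seq C) : Seq C := fun n =>
  match n with
  | 0 => M ⊗ X 0
  | k + 1 => X (k + 1)

variable (C) in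
/-- A `Set`-valued functor on `NCᵒᵖ × NC`, described elementwise: contravariant in the
first sequence, covariant in the second, with functorial action on the componentwise
morphisms of the product category `NC`. -/
structure SetBifunctor where
  obj : Seq C → Seq C → Type (max u v)
  map : ∀ {X' X Y Y' : Seq C},
    (∀ n, X' n ⟶ X n) → (∀ n, Y n ⟶ Y' n) → obj X Y → obj X' Y'
  map_id : ∀ (X Y : Seq C) (q : obj X Y),
    map (fun n => 𝟙 (X n)) (fun n => 𝟙 (Y n)) q = q
  map_comp : ∀ {X'' X' X Y Y' Y'' : Seq C}
    (u' : ∀ n, X'' n ⟶ X' n) (u : ∀ n, X' n ⟶ X n)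
    (v : ∀ n, Y n ⟶ Y' n) (v' : ∀ n, Y' n ⟶ Y'' n) (q : obj X Y),
    map (fun n => u' n ≫ u n) (fun n => v n ≫ v' n) q = map u' v' (map u v q)

/-- The object part of the endofunctor `(hom ⊡ −)`:
`(hom ⊡ Q)(X,Y) = Σ_{M ∈ C} Hom(X₀, M ⊗ Y₀) × Q(M·tail X, tail Y)`. -/
def PhiObj (Q : SetBifunctor C) (X Y : Seq C) : Type (max u v) :=
  Σ M : C, (X 0 ⟶ M ⊗ Y 0) × Q.obj (consSeq M (tailSeq X)) (tailSeq Y)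

/-- Whiskering a componentwise morphism by a memory object `M`:
`M·tail u : M·tail X' ⟶ M·tail X`. -/
def consHom (M : C) {X' X : Seq C} (u : ∀ n, X' n ⟶ X n) :
    ∀ n, consSeq M (tailSeq X') n ⟶ consSeq M (tailSeq X) n :=
  fun n =>
    match n with
    | 0 => M ◁ u 1
    | k + 1 => u (k + 2)

/-- Action of the endofunctor `(hom ⊡ −)` applied to `Q` on the morphisms of
`NCᵒᵖ × NC`. -/
def phiMap (Q : SetBifunctor C) {X' X Y Y' : Seq C}
    (u : ∀ n, X' n ⟶ X n) (v : ∀ n, Y n ⟶ Y' n) :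
    PhiObj Q X Y → PhiObj Q X' Y' :=
  fun p => ⟨p.1, u 0 ≫ p.2.1 ≫ (p.1 ◁ v 0),
    Q.map (consHom p.1 u) (fun n => v (n + 1)) p.2.2⟩

variable (C) in
/-- A coalgebra for the endofunctor `(hom ⊡ −)`: a `Set`-valued bifunctor on
`NCᵒᵖ × NC` with a natural transformation into its image under `(hom ⊡ −)`. -/
structure Coalg where
  Q : SetBifunctor C
  str : ∀ X Y, Q.obj X Y → PhiObj Q X Y
  natural : ∀ {X' X Y Y' : Seq C} (u : ∀ n, X' n ⟶ X n) (v : ∀ n, Y n ⟶ Y' n)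
    (q : Q.obj X Y), str X' Y' (Q.map u v q) = phiMap Q u v (str X Y q)

/-- A morphism of coalgebras for `(hom ⊡ −)`: a natural transformation commuting with
the structure maps. -/
structure CoalgHom (A B : Coalg C) where
  app : ∀ X Y, A.Q.obj X Y → B.Q.obj X Y
  natural : ∀ {X' X Y Y' : Seq C} (u : ∀ n, X' n ⟶ X n) (v : ∀ n, Y n ⟶ Y' n)
    (q : A.Q.obj X Y), app X' Y' (A.Q.map u v q) = B.Q.map u v (app X Y q)
  comm : ∀ (X Y : Seq C) (q : A.Q.obj X Y),
    B.str X Y (app X Y q) =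
      ⟨(A.str X Y q).1, (A.str X Y q).2.1, app _ _ (A.str X Y q).2.2⟩

/-- Intensional sequences:
`iSeq(X,Y) = Σ_{M : ℕ → C} Π_n Hom(M_{n-1} ⊗ X_n, M_n ⊗ Y_n)` with `M_{-1} = I`. -/
def ISeqObj (X Y : Seq C) : Type (max u v) :=
  Σ M : Seq C,
    ((𝟙_ C ⊗ X 0 : C) ⟶ M 0 ⊗ Y 0) ×
    ∀ n, ((M n ⊗ X (n + 1) : C) ⟶ M (n + 1) ⊗ Y (n + 1))

/-- Functorial action of `iSeq`: pre- and post-composition with the components. -/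
def ISeqMap {X' X Y Y' : Seq C} (u : ∀ n, X' n ⟶ X n) (v : ∀ n, Y n ⟶ Y' n) :
    ISeqObj X Y → ISeqObj X' Y' :=
  fun q =>
    ⟨q.1, (𝟙_ C ◁ u 0) ≫ q.2.1 ≫ (q.1 0 ◁ v 0),
      fun n => (q.1 n ◁ u (n + 1)) ≫ q.2.2 n ≫ (q.1 (n + 1) ◁ v (n + 1))⟩

variable (C) in
/-- The bifunctor `iSeq` of intensional sequences. -/
def ISeqBifunctor : SetBifunctor C where
  obj := ISeqObj
  map := ISeqMap
  map_id := by
    rintro X Y ⟨M, f0, f⟩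
    simp [ISeqMap] <;> rfl
  map_comp := by
    rintro X'' X' X Y Y' Y'' u' u v v' ⟨M, f0, f⟩
    simp [ISeqMap, MonoidalCategory.whiskerLeft_comp] <;> rfl

/-- The structure map of `iSeq`: splitting off the first morphism,
`iSeq(X,Y) ≅ Σ_{M ∈ C} Hom(X₀, M ⊗ Y₀) × iSeq(M·tail X, tail Y)`. -/
def ISeqStr (X Y : Seq C) : ISeqObj X Y → PhiObj (ISeqBifunctor C) X Y :=
  fun q =>
    ⟨q.1 0, (λ_ (X 0)).inv ≫ q.2.1,
      ⟨tailSeq q.1, (λ_ (q.1 0 ⊗ X 1)).hom ≫ q.2.2 0, fun n => q.2.2 (n + 1)⟩⟩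

variable (C) in
/-- `iSeq` as a coalgebra of `(hom ⊡ −)`. -/
def ISeqCoalg : Coalg C where
  Q := ISeqBifunctor C
  str := ISeqStr
  natural := by
    rintro X' X Y Y' u v ⟨M, f0, f⟩
    simp [ISeqStr, ISeqMap, phiMap, ISeqBifunctor, consHom, consSeq, tailSeq] <;> rfl


/-!
Splitting off the first morphism of an intensional sequence is inverted by prepending a
memory object and a morphism, so `iSeq` is a fixpoint.  A coalgebra `A` unfolds each
`q : A(X,Y)` into an intensional sequence by applying its structure map to `q`, then to
the remaining state, and so on, recording the memory objects and morphisms produced.  Both naturality of this unfolding and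
uniqueness of coalgebra morphisms into `iSeq` are instances of coinduction: intensional
sequences related by a bisimulation are equal, by induction on the position.
-/

section

variable {C : Type u} [Category.{v} C] [MonoidalCategory C]

namespace ISeqObj

theorem ext_heq {X Y : Seq C} {p p' : ISeqObj X Y} (hM : p.1 = p'.1) (h0 : HEq p.2.1 p'.2.1)
    (hs : ∀ n, HEq (p.2.2 n) (p'.2.2 n)) : p = p' := by
  obtain ⟨M, f0, fs⟩ := p
  obtain ⟨M', f0', fs'⟩ := p'
  obtain rfl : M = M' := hM
  obtain rfl : f0 = f0' := eq_of_heq h0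
  obtain rfl : fs = fs' := funext fun n => eq_of_heq (hs n)
  rfl

def splitEquiv (X Y : Seq C) : ISeqObj X Y ≃ PhiObj (ISeqBifunctor C) X Y where
  toFun := ISeqStr X Y
  invFun p :=
    ⟨fun | 0 => p.1 | n + 1 => p.2.2.1 n,
      (λ_ (X 0)).hom ≫ p.2.1,
      fun | 0 => (λ_ _).inv ≫ p.2.2.2.1 | n + 1 => p.2.2.2.2 n⟩
  left_inv p :=
    ext_heq (funext fun | 0 => rfl | _ + 1 => rfl) (heq_of_eq (Iso.hom_inv_id_assoc _ _))
      fun | 0 => heq_of_eq (Iso.inv_hom_id_assoc _ _) | _ + 1 => HEq.rfl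
  right_inv := by
    rintro ⟨M, f, N, g, gs⟩
    dsimp only [ISeqStr]
    congr
    · exact Iso.inv_hom_id_assoc _ f
    · exact Iso.hom_inv_id_assoc _ g

def IsBisimulation (R : ∀ X Y : Seq C, ISeqObj X Y → ISeqObj X Y → Prop) : Prop :=
  ∀ X Y p p', R X Y p p' →
    ∃ (M : C) (f : X 0 ⟶ M ⊗ Y 0) (t t' : ISeqObj (consSeq M (tailSeq X)) (tailSeq Y)),
      ISeqStr X Y p = ⟨M, f, t⟩ ∧ ISeqStr X Y p' = ⟨M, f, t'⟩ ∧ R _ _ t t'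

theorem eq_of_isBisimulation {R : ∀ X Y : Seq C, ISeqObj X Y → ISeqObj X Y → Prop}
    (hR : IsBisimulation R) {X Y : Seq C} {p p' : ISeqObj X Y} (h : R X Y p p') : p = p' := by
  have destruct : ∀ {X Y : Seq C} {p p' : ISeqObj X Y}, R X Y p p' →
      ∃ (M : C) (f : X 0 ⟶ M ⊗ Y 0) (t t' : ISeqObj (consSeq M (tailSeq X)) (tailSeq Y)),
        p = (splitEquiv X Y).symm ⟨M, f, t⟩ ∧ p' = (splitEquiv X Y).symm ⟨M, f, t'⟩ ∧
          R _ _ t t' := by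
    intro X Y p p' h
    obtain ⟨M, f, t, t', hp, hp', ht⟩ := hR X Y p p' h
    exact ⟨M, f, t, t', (Equiv.eq_symm_apply _).2 hp, (Equiv.eq_symm_apply _).2 hp', ht⟩
  have agree : ∀ n {X Y : Seq C} {p p' : ISeqObj X Y}, R X Y p p' →
      p.1 n = p'.1 n ∧ HEq (p.2.2 n) (p'.2.2 n) := by
    intro n
    induction n with
    | zero =>
      -- both 0-th morphisms are built from the common head of `t` and `t'`
      intro X Y p p' h
      obtain ⟨M, f, t, t', rfl, rfl, ht⟩ := destruct h
      obtain ⟨N, g, s, s', rfl, rfl, -⟩ := destruct ht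
      exact ⟨rfl, HEq.rfl⟩
    | succ n ih =>
      intro X Y p p' h
      obtain ⟨M, f, t, t', rfl, rfl, ht⟩ := destruct h
      exact ih ht
  obtain ⟨M, f, t, t', rfl, rfl, -⟩ := destruct h
  exact ext_heq (funext fun n => (agree n h).1) HEq.rfl fun n => (agree n h).2

end ISeqObj

namespace Coalg

variable (A : Coalg C)

/- Recursing through the successor state, instead of iterating the structure map, makes
`memory (n + 1) q = memory n (A.str _ _ q).2.2` and the types of `transition` hold
definitionally, so no transport along equalities of objects is ever needed. -/
def memory : ℕ → ∀ {X Y : Seq C}, A.Q.obj X Y → C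
  | 0, _, _, q => (A.str _ _ q).1
  | n + 1, _, _, q => memory n (A.str _ _ q).2.2

def transition : ∀ (n : ℕ) {X Y : Seq C} (q : A.Q.obj X Y),
    A.memory n q ⊗ X (n + 1) ⟶ A.memory (n + 1) q ⊗ Y (n + 1)
  | 0, _, _, q => (A.str _ _ (A.str _ _ q).2.2).2.1
  | n + 1, _, _, q => transition n (A.str _ _ q).2.2

def unfold {X Y : Seq C} (q : A.Q.obj X Y) : ISeqObj X Y :=
  ⟨fun n => A.memory n q, (λ_ (X 0)).hom ≫ (A.str X Y q).2.1, fun n => A.transition n q⟩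

theorem str_unfold {X Y : Seq C} (q : A.Q.obj X Y) :
    ISeqStr X Y (A.unfold q) =
      ⟨(A.str X Y q).1, (A.str X Y q).2.1, A.unfold (A.str X Y q).2.2⟩ := by
  dsimp only [ISeqStr, unfold]
  congr
  exact Iso.inv_hom_id_assoc _ _

theorem unfold_map {X' X Y Y' : Seq C} (u : ∀ n, X' n ⟶ X n) (v : ∀ n, Y n ⟶ Y' n)
    (q : A.Q.obj X Y) : A.unfold (A.Q.map u v q) = ISeqMap u v (A.unfold q) := by
  refine ISeqObj.eq_of_isBisimulation (R := fun X' Y' p p' => ∃ (X Y : Seq C)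
    (u : ∀ n, X' n ⟶ X n) (v : ∀ n, Y n ⟶ Y' n) (q : A.Q.obj X Y),
      p = A.unfold (A.Q.map u v q) ∧ p' = ISeqMap u v (A.unfold q)) ?_ ⟨X, Y, u, v, q, rfl, rfl⟩
  rintro X' Y' _ _ ⟨X, Y, u, v, q, rfl, rfl⟩
  let M := (A.str X Y q).1
  let q' := (A.str X Y q).2.2
  refine ⟨M, u 0 ≫ (A.str X Y q).2.1 ≫ (M ◁ v 0),
    A.unfold (A.Q.map (consHom M u) (fun n => v (n + 1)) q'),
    ISeqMap (consHom M u) (fun n => v (n + 1)) (A.unfold q'), ?_, ?_,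
    _, _, consHom M u, fun n => v (n + 1), q', rfl, rfl⟩
  · rw [str_unfold, A.natural]
    rfl
  · exact ((ISeqCoalg C).natural u v _).trans (congrArg _ (A.str_unfold q))

def unfoldHom : CoalgHom A (ISeqCoalg C) where
  app _ _ := A.unfold
  natural := A.unfold_map
  comm _ _ := A.str_unfold

end Coalg

theorem CoalgHom.app_eq_app {A : Coalg C} (h h' : CoalgHom A (ISeqCoalg C)) :
    h.app = h'.app := by
  funext X Y q
  refine ISeqObj.eq_of_isBisimulation
    (R := fun X Y p p' => ∃ q, p = h.app X Y q ∧ p' = h'.app X Y q) ?_ ⟨q, rfl, rfl⟩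
  rintro X Y _ _ ⟨q, rfl, rfl⟩
  exact ⟨_, _, _, _, h.comm X Y q, h'.comm X Y q, _, rfl, rfl⟩

end

/-- **Intensional sequences are the terminal fixpoint / terminal coalgebra of
`(hom ⊡ −)`**: the structure map of `iSeq` is a bijection at every pair of sequences
(so `iSeq` is a fixpoint), and `iSeq` is terminal in the category of coalgebras:
every coalgebra admits a unique coalgebra morphism into it. -/
theorem iseq_terminal_coalgebra :
    (∀ X Y : Seq C, Function.Bijective (ISeqStr (C := C) X Y)) ∧
    (∀ A : Coalg C,
      Nonempty (CoalgHom A (ISeqCoalg C)) ∧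
      ∀ h h' : CoalgHom A (ISeqCoalg C), h.app = h'.app) :=
  ⟨fun X Y => (ISeqObj.splitEquiv X Y).bijective,
    fun A => ⟨⟨A.unfoldHom⟩, CoalgHom.app_eq_app⟩⟩

end Stmt2
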